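/- There exists N₀ such that for every integer N ≥ N₀ with gcd(N, 6) = 1, every finite additive abelian group G of cardinality N, and every useful pair (S, k) with S ⊆ G, at least 80% of the k-element subsets X of S satisfy both of the following: X is dissociated, and the number of quadruples (x₁, x₂, s₁, s₂) ∈ X × X × S × S with x₁ ≠ x₂, s₁ ≠ s₂ and x₁ + x₂ = s₁ + s₂ is at most |S|/(log N)¹⁵. -/

import Mathlib

open Finset

/-- The restricted sumset `E[X] = X +̂ X = {x + x' : x, x' ∈ X, x ≠ x'}`. -/
def EHat {G : Type*} [AddCommGroup G] [DecidableEq G] (X : Finset G) : Finset G :=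
  ((X ×ˢ X).filter fun p => p.1 ≠ p.2).image fun p => p.1 + p.2

/-- The number of quadruples `(x₁, x₂, s₁, s₂) ∈ X × X × S × S` with `x₁ ≠ x₂`,
`s₁ ≠ s₂` and `x₁ + x₂ = s₁ + s₂`. -/
def quadCount {G : Type*} [AddCommGroup G] [DecidableEq G] (X S : Finset G) : ℕ :=
  (((X ×ˢ X) ×ˢ (S ×ˢ S)).filter fun q =>
    q.1.1 ≠ q.1.2 ∧ q.2.1 ≠ q.2.2 ∧ q.1.1 + q.1.2 = q.2.1 + q.2.2).card

/-- `X` has lack of structure with respect to `S` (in a group of cardinality `N`). -/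
def LackOfStructure {G : Type*} [AddCommGroup G] [DecidableEq G]
    (X S : Finset G) (N : ℕ) : Prop :=
  (quadCount X S : ℝ) ≤ (S.card : ℝ) / Real.log N ^ 15

/-- A pair `(S, k)` is useful. -/
def Useful {G : Type*} [AddCommGroup G] [Fintype G] [DecidableEq G]
    (S : Finset G) (k : ℕ) : Prop :=
  -- (i) cardinality
  ((Fintype.card G : ℝ) / (2 ^ 12 * Real.log (Fintype.card G) ^ 20) < (S.card : ℝ) ∧
    (S.card : ℝ) ≤ (Fintype.card G : ℝ) / Real.log (Fintype.card G) ^ 20) ∧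
  -- (ii) good clique size
  (Real.logb 2 (Fintype.card G) ≤ (k : ℝ) ∧
    (k : ℝ) ≤ 3 * Real.logb 2 (Fintype.card G) ∧
    (Fintype.card G : ℝ) / (2 * Real.log (Fintype.card G) ^ 8) <
      (S.card.choose k : ℝ) * 2 ^ (-(k.choose 2 : ℤ)) ∧
    (S.card.choose k : ℝ) * 2 ^ (-(k.choose 2 : ℤ)) ≤
      (Fintype.card G : ℝ) / Real.log (Fintype.card G) ^ 8) ∧
  -- (iii) lack of structure for at least 90% of k-element subsets of S
  9 * (S.powersetCard k).card ≤
    10 * Nat.card {X : Finset G // X ⊆ S ∧ X.card = k ∧ LackOfStructure X S (Fintype.card G)}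

/-- A set `X` is dissociated: any two representations of an element as a sum of four
elements of `X` agree up to permutation. -/
def Dissociated {G : Type*} [AddCommGroup G] (X : Finset G) : Prop :=
  ∀ x₁ x₂ x₃ x₄ y₁ y₂ y₃ y₄ : G, x₁ ∈ X → x₂ ∈ X → x₃ ∈ X → x₄ ∈ X →
    y₁ ∈ X → y₂ ∈ X → y₃ ∈ X → y₄ ∈ X →
    x₁ + x₂ + x₃ + x₄ = y₁ + y₂ + y₃ + y₄ →
    ({x₁, x₂, x₃, x₄} : Multiset G) = {y₁, y₂, y₃, y₄}

/-!
If `X` is not dissociated, cancelling the elements common to two representations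
`x₁ + x₂ + x₃ + x₄ = y₁ + y₂ + y₃ + y₄` leaves a nonempty set `T ⊆ X` of at most 8 elements
carrying a relation `∑ c_g • g = 0` with `0 < |c_g| ≤ 4`. As `gcd(N, 6) = 1`, multiplication by
each `c_g` is injective on `G`, so for given coefficients such a `T` of size `j` is determined by
`j - 1` of its elements: there are at most `9 ^ j * |S| ^ (j - 1)` of them. Each lies in
`C(|S| - j, k - j) ≤ (2k / |S|) ^ j * C(|S|, k)` of the `k`-subsets of `S`, so at most
`8 (18k) ^ 8 / |S| ≤ 1/10` of these are not dissociated, since (i) and `k ≤ 3 log₂ N` force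
`|S| ≥ 10 ^ 12 * k ^ 8` for large `N`. Discarding them from the `90%` of `k`-subsets with lack of
structure leaves `80%`.
-/

section Relations

variable {G : Type*} [AddCommGroup G]

def HasBoundedRelation (b : ℕ) (T : Finset G) : Prop :=
  ∃ c : G → ℤ, (∀ g ∈ T, c g ≠ 0 ∧ |c g| ≤ b) ∧ ∑ g ∈ T, c g • g = 0

variable [DecidableEq G]

lemma Multiset.exists_hasBoundedRelation_of_sum_eq {A B : Multiset G} {b : ℕ}
    (hA : Multiset.card A ≤ b) (hB : Multiset.card B ≤ b) (hsum : A.sum = B.sum) (hne : A ≠ B) :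
    ∃ T ⊆ (A + B).toFinset, T.Nonempty ∧ HasBoundedRelation b T := by
  set c : G → ℤ := fun g => (A.count g : ℤ) - B.count g
  refine ⟨(A + B).toFinset.filter (c · ≠ 0), filter_subset _ _, ?_, c, ?_, ?_⟩
  · obtain ⟨g, hg⟩ : ∃ g, A.count g ≠ B.count g := by
      by_contra! h
      exact hne (Multiset.ext.mpr h)
    refine ⟨g, mem_filter.mpr
      ⟨Multiset.mem_toFinset.mpr ?_, sub_ne_zero.mpr (by exact_mod_cast hg)⟩⟩
    rw [Multiset.mem_add, ← Multiset.count_pos, ← Multiset.count_pos]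
    omega
  · intro g hg
    have hAg := (A.count_le_card g).trans hA
    have hBg := (B.count_le_card g).trans hB
    exact ⟨(mem_filter.mp hg).2, abs_le.mpr ⟨by simp only [c]; omega, by simp only [c]; omega⟩⟩
  · have hsplit : ∀ M : Multiset G, M ≤ A + B →
        ∑ g ∈ (A + B).toFinset, (M.count g : ℤ) • g = M.sum := fun M hM => by
      simp_rw [natCast_zsmul]
      exact (Finset.sum_multiset_count_of_subset M _
        (Multiset.toFinset_subset.mpr (Multiset.subset_of_le hM))).symm
    rw [Finset.sum_filter_of_ne (fun g _ h => left_ne_zero_of_smul h)]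
    simp only [c, sub_smul, sum_sub_distrib]
    rw [hsplit A (Multiset.le_add_right A B), hsplit B (Multiset.le_add_left B A), hsum, sub_self]

lemma exists_hasBoundedRelation_of_not_dissociated {X : Finset G} (h : ¬ Dissociated X) :
    ∃ T ⊆ X, T.Nonempty ∧ #T ≤ 8 ∧ HasBoundedRelation 4 T := by
  simp only [Dissociated, not_forall] at h
  obtain ⟨x₁, x₂, x₃, x₄, y₁, y₂, y₃, y₄, hx₁, hx₂, hx₃, hx₄, hy₁, hy₂, hy₃, hy₄, hsum, hne⟩ := h
  obtain ⟨T, hT, hTne, hrel⟩ := Multiset.exists_hasBoundedRelation_of_sum_eq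
    (A := {x₁, x₂, x₃, x₄}) (B := {y₁, y₂, y₃, y₄}) (b := 4) (by simp) (by simp)
    (by simpa [add_assoc] using hsum) hne
  refine ⟨T, fun g hg => ?_, hTne, ?_, hrel⟩
  · have := hT hg
    simp only [Multiset.mem_toFinset, Multiset.insert_eq_cons, Multiset.mem_add,
      Multiset.mem_cons, Multiset.mem_singleton] at this
    rcases this with (rfl | rfl | rfl | rfl) | (rfl | rfl | rfl | rfl) <;> assumption
  · calc #T ≤ #(({x₁, x₂, x₃, x₄} + {y₁, y₂, y₃, y₄} : Multiset G).toFinset) := card_le_card hT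
      _ ≤ 8 := (Multiset.toFinset_card_le _).trans (by simp)

end Relations

lemma zsmul_injective_of_coprime {G : Type*} [AddGroup G] {c : ℤ}
    (hc : (Nat.card G).Coprime c.natAbs) : Function.Injective (c • · : G → G) := by
  have hn := hc.nsmul_right_bijective.injective
  rcases Int.natAbs_eq c with h | h <;> rw [h]
  · simpa only [natCast_zsmul] using hn
  · simp only [neg_zsmul, natCast_zsmul]
    exact neg_injective.comp hn

lemma zsmul_injective_of_coprime_six {G : Type*} [AddGroup G] (hG : Nat.Coprime (Nat.card G) 6)
    {c : ℤ} (hc0 : c ≠ 0) (hc4 : |c| ≤ 4) : Function.Injective (c • · : G → G) := by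
  refine zsmul_injective_of_coprime ((Nat.Coprime.pow_right 2 hG).coprime_dvd_right ?_)
  -- each of `1, 2, 3, 4` divides `6 ^ 2`
  have : c.natAbs ≤ 4 := by have := abs_le.mp hc4; omega
  interval_cases h : c.natAbs <;> omega

section Counting

variable {G : Type*} [AddCommGroup G] [DecidableEq G]

lemma card_filter_sum_zsmul_eq_zero_le {m : ℕ} (c : Fin (m + 1) → ℤ)
    (hc : Function.Injective (c (Fin.last m) • · : G → G)) (S : Finset G) :
    #{z ∈ Fintype.piFinset fun _ => S | ∑ i, c i • z i = 0} ≤ #S ^ m := by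
  rw [← Fintype.card_piFinset_const]
  refine card_le_card_of_injOn (fun z => Fin.init z) (fun z hz => ?_) fun z hz w hw h => ?_
  · exact Fintype.mem_piFinset.mpr fun i =>
      Fintype.mem_piFinset.mp (mem_filter.mp hz).1 (Fin.castSucc i)
  · have hz := (mem_filter.mp hz).2
    have hw := (mem_filter.mp hw).2
    rw [Fin.sum_univ_castSucc] at hz hw
    have hinit : ∀ i : Fin m, z i.castSucc = w i.castSucc := congrFun h
    funext i
    refine Fin.lastCases (hc ?_) hinit i
    simp only [hinit] at hz
    exact add_left_cancel (hz.trans hw.symm)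

lemma card_filter_hasBoundedRelation_le {b : ℕ}
    (hb : ∀ c : ℤ, c ≠ 0 → |c| ≤ b → Function.Injective (c • · : G → G))
    (S : Finset G) (m : ℕ) [DecidablePred (HasBoundedRelation b : Finset G → Prop)] :
    #{T ∈ S.powersetCard (m + 1) | HasBoundedRelation b T} ≤ (2 * b + 1) ^ (m + 1) * #S ^ m := by
  set C : Finset (Fin (m + 1) → ℤ) :=
    {c ∈ Fintype.piFinset fun _ => Icc (-b : ℤ) b | c (Fin.last m) ≠ 0}
  set sols : (Fin (m + 1) → ℤ) → Finset (Fin (m + 1) → G) := fun c =>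
    {z ∈ Fintype.piFinset fun _ => S | ∑ i, c i • z i = 0}
  have hC : #C ≤ (2 * b + 1) ^ (m + 1) := by
    refine (card_filter_le _ _).trans_eq ?_
    rw [Fintype.card_piFinset_const, Int.card_Icc]
    congr 1
    omega
  have hcover : {T ∈ S.powersetCard (m + 1) | HasBoundedRelation b T} ⊆
      C.biUnion fun c => (sols c).image fun z => univ.image z := by
    intro T hT
    obtain ⟨hT, c, hc, hsum⟩ := mem_filter.mp hT
    obtain ⟨hTS, hTcard⟩ := mem_powersetCard.mp hT
    -- an enumeration `z` of `T` solves the relation with coefficients `c ∘ z`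
    set e := T.equivFinOfCardEq hTcard
    set z : Fin (m + 1) → G := fun i => e.symm i
    have hzT : ∀ i, z i ∈ T := fun i => (e.symm i).2
    simp only [mem_biUnion, mem_image]
    refine ⟨c ∘ z, ?_, z, ?_, ?_⟩
    · simp only [C, mem_filter, Fintype.mem_piFinset, mem_Icc, Function.comp_apply, ← abs_le]
      exact ⟨fun i => (hc _ (hzT i)).2, (hc _ (hzT _)).1⟩
    · refine mem_filter.mpr ⟨Fintype.mem_piFinset.mpr fun i => hTS (hzT i), ?_⟩
      rw [← hsum, ← sum_coe_sort T]
      exact e.symm.sum_comp fun g : T => c g • (g : G)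
    · ext g
      simp only [mem_image, mem_univ, true_and]
      exact ⟨by rintro ⟨i, rfl⟩; exact hzT i, fun hg => ⟨e ⟨g, hg⟩, by simp [z]⟩⟩
  calc _ ≤ _ := card_le_card hcover
    _ ≤ ∑ c ∈ C, #((sols c).image fun z => univ.image z) := card_biUnion_le
    _ ≤ ∑ _c ∈ C, #S ^ m := sum_le_sum fun c hc => card_image_le.trans
        (card_filter_sum_zsmul_eq_zero_le c (hb _ (mem_filter.mp hc).2
          (abs_le.mpr (mem_Icc.mp (Fintype.mem_piFinset.mp (mem_filter.mp hc).1 _)))) S)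
    _ ≤ _ := by
      rw [sum_const, smul_eq_mul]
      exact Nat.mul_le_mul_right _ hC

end Counting

lemma Nat.pow_sub_mul_choose_sub_le {s k j : ℕ} (hjk : j ≤ k) :
    (s + 1 - j) ^ j * (s - j).choose (k - j) ≤ k ^ j * s.choose k :=
  calc (s + 1 - j) ^ j * (s - j).choose (k - j)
      ≤ s.descFactorial j * (s - j).choose (k - j) :=
        Nat.mul_le_mul_right _ (Nat.pow_sub_le_descFactorial s j)
    _ = k.descFactorial j * s.choose k := by
        rw [Nat.descFactorial_eq_factorial_mul_choose, Nat.descFactorial_eq_factorial_mul_choose,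
          mul_assoc, ← Nat.choose_mul hjk]
        ring
    _ ≤ k ^ j * s.choose k := Nat.mul_le_mul_right _ (Nat.descFactorial_le_pow k j)

lemma Nat.pow_mul_choose_sub_le {s k j : ℕ} (hjk : j ≤ k) (hjs : 2 * j ≤ s + 2) :
    s ^ j * (s - j).choose (k - j) ≤ (2 * k) ^ j * s.choose k :=
  calc s ^ j * (s - j).choose (k - j)
      ≤ (2 * (s + 1 - j)) ^ j * (s - j).choose (k - j) := by gcongr; omega
    _ = 2 ^ j * ((s + 1 - j) ^ j * (s - j).choose (k - j)) := by ring
    _ ≤ 2 ^ j * (k ^ j * s.choose k) := Nat.mul_le_mul_left _ (Nat.pow_sub_mul_choose_sub_le hjk)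
    _ = (2 * k) ^ j * s.choose k := by ring

section NotDissociated

variable {G : Type*} [AddCommGroup G] [DecidableEq G]

lemma card_filter_not_dissociated_le [DecidablePred (Dissociated : Finset G → Prop)]
    (hb : ∀ c : ℤ, c ≠ 0 → |c| ≤ 4 → Function.Injective (c • · : G → G))
    (S : Finset G) {k : ℕ} (hk : 8 ≤ k) :
    #{X ∈ S.powersetCard k | ¬ Dissociated X} ≤
      ∑ m ∈ range 8, 9 ^ (m + 1) * #S ^ m * (#S - (m + 1)).choose (k - (m + 1)) := by
  classical
  have hcover : {X ∈ S.powersetCard k | ¬ Dissociated X} ⊆ (range 8).biUnion fun m =>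
      {T ∈ S.powersetCard (m + 1) | HasBoundedRelation 4 T}.biUnion fun T =>
        {X ∈ S.powersetCard k | T ⊆ X} := by
    intro X hX
    obtain ⟨hXS, hX⟩ := mem_filter.mp hX
    obtain ⟨T, hTX, hTne, hT8, hT⟩ := exists_hasBoundedRelation_of_not_dissociated hX
    have hTpos := hTne.card_pos
    simp only [mem_biUnion, mem_range, mem_filter, mem_powersetCard]
    exact ⟨#T - 1, by omega, T,
      ⟨⟨hTX.trans (mem_powersetCard.mp hXS).1, by omega⟩, hT⟩, mem_powersetCard.mp hXS, hTX⟩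
  refine (card_le_card hcover).trans <| card_biUnion_le.trans <| sum_le_sum fun m hm => ?_
  calc _ ≤ ∑ T ∈ {T ∈ S.powersetCard (m + 1) | HasBoundedRelation 4 T},
        #{X ∈ S.powersetCard k | T ⊆ X} := card_biUnion_le
    _ = ∑ T ∈ {T ∈ S.powersetCard (m + 1) | HasBoundedRelation 4 T},
        (#S - (m + 1)).choose (k - (m + 1)) := sum_congr rfl fun T hT => by
          obtain ⟨hTS, hTcard⟩ := mem_powersetCard.mp (mem_filter.mp hT).1
          rw [card_filter_powersetCard_subset T S k hTS (by rw [mem_range] at hm; omega), hTcard]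
    _ ≤ _ := by
        rw [sum_const, smul_eq_mul]
        exact Nat.mul_le_mul_right _ (card_filter_hasBoundedRelation_le hb S m)

lemma ten_mul_card_filter_not_dissociated_le [DecidablePred (Dissociated : Finset G → Prop)]
    (hb : ∀ c : ℤ, c ≠ 0 → |c| ≤ 4 → Function.Injective (c • · : G → G))
    {S : Finset G} {k : ℕ} (hk : 8 ≤ k) (hS : 10 ^ 12 * k ^ 8 ≤ #S) :
    10 * #{X ∈ S.powersetCard k | ¬ Dissociated X} ≤ (#S).choose k := by
  set s := #S
  have hs : 14 ≤ s := by
    have := Nat.one_le_pow 8 k (by omega)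
    omega
  have hterm : ∀ m ∈ range 8, s * (9 ^ (m + 1) * s ^ m * (s - (m + 1)).choose (k - (m + 1))) ≤
      (18 * k) ^ 8 * s.choose k := fun m hm => by
    have hm := mem_range.mp hm
    calc _ = 9 ^ (m + 1) * (s ^ (m + 1) * (s - (m + 1)).choose (k - (m + 1))) := by ring
      _ ≤ 9 ^ (m + 1) * ((2 * k) ^ (m + 1) * s.choose k) :=
          Nat.mul_le_mul_left _ (Nat.pow_mul_choose_sub_le (by omega) (by omega))
      _ = (18 * k) ^ (m + 1) * s.choose k := by rw [← mul_assoc, ← mul_pow, ← mul_assoc]; rfl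
      _ ≤ (18 * k) ^ 8 * s.choose k := by gcongr <;> omega
  refine Nat.le_of_mul_le_mul_left ?_ (by omega : 0 < s)
  calc s * (10 * #{X ∈ S.powersetCard k | ¬ Dissociated X})
      ≤ 10 * ∑ m ∈ range 8, s * (9 ^ (m + 1) * s ^ m * (s - (m + 1)).choose (k - (m + 1))) := by
        rw [← mul_sum, mul_left_comm]
        gcongr
        exact card_filter_not_dissociated_le hb S hk
    _ ≤ 10 * ∑ _m ∈ range 8, (18 * k) ^ 8 * s.choose k := Nat.mul_le_mul_left _ (sum_le_sum hterm)
    _ ≤ 10 ^ 12 * k ^ 8 * s.choose k := by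
        rw [sum_const, card_range, smul_eq_mul, mul_pow]
        nlinarith [Nat.zero_le (k ^ 8 * s.choose k)]
    _ ≤ s * s.choose k := by gcongr

end NotDissociated

lemma eventually_log_pow_le :
    ∀ᶠ N : ℕ in Filter.atTop, 256 ≤ N ∧ 10 ^ 22 * Real.log N ^ 28 ≤ N := by
  have hlog := (Real.isLittleO_pow_log_id_atTop (n := 28)).bound (c := 10⁻¹ ^ 22) (by positivity)
  filter_upwards [Filter.eventually_ge_atTop 256,
    tendsto_natCast_atTop_atTop.eventually hlog] with N hN hlogN
  refine ⟨hN, ?_⟩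
  rw [Real.norm_eq_abs, Real.norm_eq_abs, id, Nat.abs_cast] at hlogN
  have := (le_abs_self _).trans hlogN
  rw [inv_pow] at this
  field_simp at this
  linarith

section Useful

variable {G : Type*} [AddCommGroup G] [Fintype G] [DecidableEq G] {S : Finset G} {k : ℕ}

lemma Useful.eight_le (hU : Useful S k) (hG : 256 ≤ Fintype.card G) : 8 ≤ k := by
  have h8 : (8 : ℝ) ≤ Real.logb 2 (Fintype.card G) := by
    rw [Real.le_logb_iff_rpow_le (by norm_num) (by positivity)]
    calc (2 : ℝ) ^ (8 : ℝ) = 256 := by norm_num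
      _ ≤ Fintype.card G := by exact_mod_cast hG
  exact_mod_cast h8.trans hU.2.1.1

lemma Useful.pow_le_card (hU : Useful S k) (hG : 256 ≤ Fintype.card G)
    (hlog : 10 ^ 22 * Real.log (Fintype.card G) ^ 28 ≤ Fintype.card G) :
    10 ^ 12 * k ^ 8 ≤ #S := by
  set N : ℝ := (Fintype.card G : ℝ)
  have hL : 0 < Real.log N :=
    Real.log_pos (by simp only [N]; exact_mod_cast (by omega : 1 < 256).trans_le hG)
  have hk : (k : ℝ) ≤ 5 * Real.log N := by
    have := Real.log_two_gt_d9
    have h3 := hU.2.1.2.1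
    rw [Real.logb, ← mul_div_assoc, le_div_iff₀ (by linarith)] at h3
    nlinarith [(Nat.cast_nonneg k : (0 : ℝ) ≤ k)]
  have : (10 ^ 12 * k ^ 8 : ℝ) < #S :=
    calc (10 ^ 12 * k ^ 8 : ℝ) ≤ 10 ^ 12 * (5 * Real.log N) ^ 8 := by gcongr
      _ ≤ N / (2 ^ 12 * Real.log N ^ 20) := by
        rw [le_div_iff₀ (by positivity)]
        nlinarith [pow_pos hL 28]
      _ < #S := hU.1.1
  exact_mod_cast this.le

end Useful

lemma natCard_subsets_eq_card_filter {α : Type*} (S : Finset α) (k : ℕ) (P : Finset α → Prop)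
    [DecidablePred P] :
    Nat.card {X : Finset α // X ⊆ S ∧ X.card = k ∧ P X} = #{X ∈ S.powersetCard k | P X} := by
  rw [← Nat.card_eq_finsetCard]
  exact Nat.card_congr <| Equiv.subtypeEquivRight fun X => by simp [mem_powersetCard, and_assoc]

theorem most_subsets_dissociated_and_unstructured :
    ∃ N₀ : ℕ, ∀ N : ℕ, N₀ ≤ N → Nat.gcd N 6 = 1 →
      ∀ (G : Type) [AddCommGroup G] [Fintype G] [DecidableEq G], Fintype.card G = N →
        ∀ (S : Finset G) (k : ℕ), Useful S k →
          8 * (S.powersetCard k).card ≤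
            10 * Nat.card {X : Finset G // X ⊆ S ∧ X.card = k ∧
              Dissociated X ∧ LackOfStructure X S N} := by
  obtain ⟨N₀, hN₀⟩ := Filter.eventually_atTop.mp eventually_log_pow_le
  refine ⟨N₀, fun N hN hN6 G _ _ _ hG S k hU => ?_⟩
  subst hG
  obtain ⟨h256, hlog⟩ := hN₀ _ hN
  have hsmul : ∀ c : ℤ, c ≠ 0 → |c| ≤ 4 → Function.Injective (c • · : G → G) :=
    fun c => zsmul_injective_of_coprime_six (by rwa [Nat.card_eq_fintype_card])
  classical
  have hbad := ten_mul_card_filter_not_dissociated_le hsmul (hU.eight_le h256)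
    (hU.pow_le_card h256 hlog)
  have hgood := hU.2.2
  rw [natCard_subsets_eq_card_filter] at hgood ⊢
  have hsplit : #{X ∈ S.powersetCard k | LackOfStructure X S (Fintype.card G)} ≤
      #{X ∈ S.powersetCard k | Dissociated X ∧ LackOfStructure X S (Fintype.card G)} +
        #{X ∈ S.powersetCard k | ¬ Dissociated X} :=
    (card_le_card fun X hX => by simp only [mem_union, mem_filter] at hX ⊢; tauto).trans
      (card_union_le _ _)
  rw [card_powersetCard] at hgood ⊢
  omega
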